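/- arXiv:2506.19648 — 2 statements merged into one kernel-verified Lean document; each statement's English description precedes it below -/
import Mathlib

section
/- Let X ~ Exp(λ) and Y ~ Hypoexp(μ₁, μ₂) be independent with μ₁ ≠ μ₂, Λ = {Y > X}, and w = μ₂(λ + μ₂)/((μ₂ − μ₁)(λ + μ₁ + μ₂)). Then the conditional density of X given Λ is f(x) = w(λ+μ₁)exp(−(λ+μ₁)x) + (1−w)(λ+μ₂)exp(−(λ+μ₂)x) for x > 0. -/
open MeasureTheory ProbabilityTheory Real

/-- `X` is an exponential random variable with rate `r` under `μ`. -/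
def IsExpRV {Ω : Type*} [MeasurableSpace Ω] (μ : Measure Ω) (r : ℝ) (X : Ω → ℝ) : Prop :=
  Measurable X ∧ ∀ t : ℝ, 0 ≤ t → μ {ω | X ω > t} = ENNReal.ofReal (Real.exp (-r * t))

/-- `X` is hypoexponential with (distinct) parameters `(a, b)` under `μ`, i.e. it is
distributed as the sum of independent `Exp(a)` and `Exp(b)` random variables. -/
def IsHypoexpRV {Ω : Type*} [MeasurableSpace Ω] (μ : Measure Ω) (a b : ℝ) (X : Ω → ℝ) : Prop :=
  Measurable X ∧ ∀ t : ℝ, 0 ≤ t →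
    μ {ω | X ω > t} =
      ENNReal.ofReal ((b * Real.exp (-a * t) - a * Real.exp (-b * t)) / (b - a))

open Set

/-!
By independence, `P(s < X < Y) = ∫_s^∞ λ e^{-λx} P(Y > x) dx`, and the exponential density times
the hypoexponential survival function is a linear combination of `e^{-(λ+μ₁)x}` and
`e^{-(λ+μ₂)x}`, which integrates in closed form. Since `X > 0` almost surely, `P(Λ)` is the value
at `s = 0`, and the quotient is the stated mixture of two exponential tails.
-/

lemma integral_Ioi_exp_neg_mul {a : ℝ} (ha : 0 < a) (s : ℝ) :
    ∫ x in Ioi s, exp (-a * x) = exp (-a * s) / a := by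
  rw [integral_exp_mul_Ioi (neg_lt_zero.mpr ha), neg_div_neg_eq]

lemma integrableOn_Ioi_add_exp_neg_mul {α β : ℝ} (hα : 0 < α) (hβ : 0 < β) (a b s : ℝ) :
    IntegrableOn (fun x => a * exp (-α * x) + b * exp (-β * x)) (Ioi s) :=
  ((exp_neg_integrableOn_Ioi s hα).const_mul a).add ((exp_neg_integrableOn_Ioi s hβ).const_mul b)

lemma integral_Ioi_add_exp_neg_mul {α β : ℝ} (hα : 0 < α) (hβ : 0 < β) (a b s : ℝ) :
    ∫ x in Ioi s, (a * exp (-α * x) + b * exp (-β * x)) =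
      a * exp (-α * s) / α + b * exp (-β * s) / β := by
  rw [integral_add ((exp_neg_integrableOn_Ioi s hα).const_mul a)
      ((exp_neg_integrableOn_Ioi s hβ).const_mul b), integral_const_mul, integral_const_mul,
    integral_Ioi_exp_neg_mul hα, integral_Ioi_exp_neg_mul hβ, mul_div_assoc, mul_div_assoc]

lemma setLIntegral_expMeasure_ofReal {r s : ℝ} (hr : 0 ≤ r) (hs : 0 ≤ s) {g : ℝ → ℝ}
    (hg : Measurable g) (hg_nonneg : ∀ x ∈ Ioi s, 0 ≤ g x)
    (hint : IntegrableOn (fun x => r * exp (-(r * x)) * g x) (Ioi s)) :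
    ∫⁻ x in Ioi s, ENNReal.ofReal (g x) ∂expMeasure r =
      ENNReal.ofReal (∫ x in Ioi s, r * exp (-(r * x)) * g x) := by
  have hdensity : expMeasure r = volume.withDensity (exponentialPDF r) := rfl
  have hpdf : Measurable (exponentialPDF r) := (measurable_exponentialPDFReal r).ennreal_ofReal
  rw [hdensity, setLIntegral_withDensity_eq_setLIntegral_mul _ hpdf hg.ennreal_ofReal
      measurableSet_Ioi,
    ofReal_integral_eq_lintegral_ofReal hint
      ((ae_restrict_iff' measurableSet_Ioi).mpr (.of_forall fun x hx =>
        mul_nonneg (by positivity) (hg_nonneg x hx)))]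
  refine setLIntegral_congr_fun measurableSet_Ioi fun x hx => ?_
  rw [Pi.mul_apply, exponentialPDF_of_nonneg (hs.trans hx.le),
    ← ENNReal.ofReal_mul (by positivity)]

namespace ProbabilityTheory.IndepFun

lemma measure_lt_inter_preimage {Ω : Type*} [MeasurableSpace Ω] {P : Measure Ω}
    [IsFiniteMeasure P] {X Y : Ω → ℝ} (hX : Measurable X) (hY : Measurable Y)
    (hXY : IndepFun X Y P) {A : Set ℝ} (hA : MeasurableSet A) :
    P ({ω | X ω < Y ω} ∩ X ⁻¹' A) = ∫⁻ x in A, P {ω | x < Y ω} ∂(P.map X) := by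
  have hE : MeasurableSet {p : ℝ × ℝ | p.1 < p.2 ∧ p.1 ∈ A} :=
    (measurableSet_lt measurable_fst measurable_snd).inter (measurable_fst hA)
  change P ((fun ω => (X ω, Y ω)) ⁻¹' {p : ℝ × ℝ | p.1 < p.2 ∧ p.1 ∈ A}) = _
  rw [← Measure.map_apply (hX.prodMk hY) hE,
    (indepFun_iff_map_prod_eq_prod_map_map hX.aemeasurable hY.aemeasurable).mp hXY,
    Measure.prod_apply hE, ← lintegral_indicator hA]
  refine lintegral_congr fun x => ?_
  by_cases hx : x ∈ A
  · have hslice : Prod.mk x ⁻¹' {p : ℝ × ℝ | p.1 < p.2 ∧ p.1 ∈ A} = Ioi x := by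
      ext y; simp [hx]
    rw [indicator_of_mem hx, hslice, Measure.map_apply hY measurableSet_Ioi]
    rfl
  · have hslice : Prod.mk x ⁻¹' {p : ℝ × ℝ | p.1 < p.2 ∧ p.1 ∈ A} = ∅ := by
      ext y; simp [hx]
    rw [indicator_of_notMem hx, hslice, measure_empty]

end ProbabilityTheory.IndepFun

namespace IsExpRV

variable {Ω : Type*} [MeasurableSpace Ω] {μ : Measure Ω} [IsProbabilityMeasure μ] {r : ℝ}
  {X : Ω → ℝ}

lemma cdf_map (hX : IsExpRV μ r X) {t : ℝ} (ht : 0 ≤ t) :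
    cdf (μ.map X) t = 1 - exp (-(r * t)) := by
  have := Measure.isProbabilityMeasure_map (μ := μ) hX.1.aemeasurable
  have hIoi : μ.map X (Ioi t) = ENNReal.ofReal (exp (-(r * t))) := by
    rw [Measure.map_apply hX.1 measurableSet_Ioi, ← neg_mul]
    exact hX.2 t ht
  rw [cdf_eq_real, ← compl_Ioi, probReal_compl_eq_one_sub measurableSet_Ioi, measureReal_def,
    hIoi, ENNReal.toReal_ofReal (exp_nonneg _)]

lemma map_eq_expMeasure (hX : IsExpRV μ r X) (hr : 0 < r) : μ.map X = expMeasure r := by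
  have := Measure.isProbabilityMeasure_map (μ := μ) hX.1.aemeasurable
  have := isProbabilityMeasure_expMeasure hr
  refine Measure.eq_of_cdf _ _ ?_
  ext t
  rw [cdf_expMeasure_eq hr]
  split_ifs with ht
  · exact hX.cdf_map ht
  · refine le_antisymm ?_ (cdf_nonneg _ _)
    calc cdf (μ.map X) t ≤ cdf (μ.map X) 0 := monotone_cdf _ (le_of_not_ge ht)
      _ = 0 := by simp [hX.cdf_map le_rfl]

lemma ae_pos (hX : IsExpRV μ r X) : ∀ᵐ ω ∂μ, 0 < X ω :=
  (prob_compl_eq_zero_iff (measurableSet_lt measurable_const hX.1)).mpr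
    (by simpa using hX.2 0 le_rfl)

end IsExpRV

noncomputable def hypoexpSurvival (a b t : ℝ) : ℝ :=
  (b * exp (-a * t) - a * exp (-b * t)) / (b - a)

lemma hypoexpSurvival_comm (a b t : ℝ) : hypoexpSurvival a b t = hypoexpSurvival b a t := by
  rw [hypoexpSurvival, hypoexpSurvival, ← neg_div_neg_eq, neg_sub, neg_sub]

lemma hypoexpSurvival_nonneg {a b t : ℝ} (ha : 0 < a) (hb : 0 < b) (ht : 0 ≤ t) :
    0 ≤ hypoexpSurvival a b t := by
  wlog hab : a < b generalizing a b
  · rcases (not_lt.mp hab).eq_or_lt with h | h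
    · simp [hypoexpSurvival, h]
    · rw [hypoexpSurvival_comm]
      exact this hb ha h
  have hexp : exp (-b * t) ≤ exp (-a * t) := exp_le_exp.mpr (by nlinarith)
  exact div_nonneg (by nlinarith [exp_pos (-b * t)]) (by linarith)

lemma mul_exp_mul_hypoexpSurvival {a b : ℝ} (hab : a ≠ b) (r x : ℝ) :
    r * exp (-(r * x)) * hypoexpSurvival a b x =
      r * b / (b - a) * exp (-(r + a) * x) + -(r * a / (b - a)) * exp (-(r + b) * x) := by
  have hba : b - a ≠ 0 := sub_ne_zero.mpr hab.symm
  rw [hypoexpSurvival, show -(r + a) * x = -(r * x) + -a * x by ring,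
    show -(r + b) * x = -(r * x) + -b * x by ring, exp_add, exp_add]
  field_simp
  ring

lemma measure_lt_inter_preimage_Ioi_of_isExpRV_of_isHypoexpRV {Ω : Type*} [MeasurableSpace Ω]
    {P : Measure Ω} [IsProbabilityMeasure P] {lam μ₁ μ₂ : ℝ} {X Y : Ω → ℝ}
    (hlam : 0 < lam) (hμ₁ : 0 < μ₁) (hμ₂ : 0 < μ₂) (hne : μ₁ ≠ μ₂)
    (hX : IsExpRV P lam X) (hY : IsHypoexpRV P μ₁ μ₂ Y) (hXY : IndepFun X Y P)
    {s : ℝ} (hs : 0 ≤ s) :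
    P ({ω | X ω < Y ω} ∩ X ⁻¹' Ioi s) =
      ENNReal.ofReal (lam * μ₂ / (μ₂ - μ₁) * exp (-(lam + μ₁) * s) / (lam + μ₁) +
        -(lam * μ₁ / (μ₂ - μ₁)) * exp (-(lam + μ₂) * s) / (lam + μ₂)) := by
  have hα : 0 < lam + μ₁ := by linarith
  have hβ : 0 < lam + μ₂ := by linarith
  have hsurvival : ∀ x ∈ Ioi s, P {ω | x < Y ω} = ENNReal.ofReal (hypoexpSurvival μ₁ μ₂ x) :=
    fun x hx => hY.2 x (hs.trans hx.le)
  have hdecomp := funext (mul_exp_mul_hypoexpSurvival hne lam)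
  rw [hXY.measure_lt_inter_preimage hX.1 hY.1 measurableSet_Ioi, hX.map_eq_expMeasure hlam,
    setLIntegral_congr_fun measurableSet_Ioi hsurvival,
    setLIntegral_expMeasure_ofReal hlam.le hs (by unfold hypoexpSurvival; fun_prop)
      (fun x hx => hypoexpSurvival_nonneg hμ₁ hμ₂ (hs.trans hx.le))
      (hdecomp ▸ integrableOn_Ioi_add_exp_neg_mul hα hβ _ _ s),
    hdecomp, integral_Ioi_add_exp_neg_mul hα hβ]

/-- Let `X ~ Exp(λ)` and `Y ~ Hypoexp(μ₁, μ₂)` be independent with `μ₁ ≠ μ₂`,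
`Λ = {Y > X}`, and `w = μ₂(λ+μ₂)/((μ₂-μ₁)(λ+μ₁+μ₂))`. Then the conditional density of
`X` given `Λ` is `f(x) = w(λ+μ₁)e^{-(λ+μ₁)x} + (1-w)(λ+μ₂)e^{-(λ+μ₂)x}` for `x > 0`. -/
theorem cond_density_exp_given_hypoexp_larger
    {Ω : Type*} [MeasurableSpace Ω] (P : Measure Ω) [IsProbabilityMeasure P]
    (lam μ₁ μ₂ : ℝ) (hlam : 0 < lam) (hμ₁ : 0 < μ₁) (hμ₂ : 0 < μ₂) (hne : μ₁ ≠ μ₂)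
    (X Y : Ω → ℝ)
    (hX : IsExpRV P lam X) (hY : IsHypoexpRV P μ₁ μ₂ Y)
    (hindep : IndepFun X Y P)
    (Λ : Set Ω) (hΛ : Λ = {ω | Y ω > X ω})
    (w : ℝ) (hw : w = μ₂ * (lam + μ₂) / ((μ₂ - μ₁) * (lam + μ₁ + μ₂))) :
    ∀ s : ℝ, 0 ≤ s →
      (P[|Λ]) {ω | X ω > s} =
        ENNReal.ofReal (∫ x in Set.Ioi s,
          (w * (lam + μ₁) * Real.exp (-(lam + μ₁) * x) +
            (1 - w) * (lam + μ₂) * Real.exp (-(lam + μ₂) * x))) := by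
  intro s hs
  have hα : 0 < lam + μ₁ := by linarith
  have hβ : 0 < lam + μ₂ := by linarith
  have hΛ_meas : MeasurableSet Λ := hΛ ▸ measurableSet_lt hX.1 hY.1
  have hΛ_inter : Λ ∩ {ω | X ω > s} = {ω | X ω < Y ω} ∩ X ⁻¹' Ioi s := by rw [hΛ]; rfl
  have hPΛ : P Λ = P ({ω | X ω < Y ω} ∩ X ⁻¹' Ioi 0) :=
    hΛ ▸ (measure_inter_conull hX.ae_pos).symm
  have hmass : lam * μ₂ / (μ₂ - μ₁) * exp (-(lam + μ₁) * 0) / (lam + μ₁) +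
      -(lam * μ₁ / (μ₂ - μ₁)) * exp (-(lam + μ₂) * 0) / (lam + μ₂) =
      lam * (lam + μ₁ + μ₂) / ((lam + μ₁) * (lam + μ₂)) := by
    simp only [mul_zero, exp_zero, mul_one]
    field_simp
    ring
  rw [cond_apply hΛ_meas, hΛ_inter, hPΛ,
    measure_lt_inter_preimage_Ioi_of_isExpRV_of_isHypoexpRV hlam hμ₁ hμ₂ hne hX hY hindep hs,
    measure_lt_inter_preimage_Ioi_of_isExpRV_of_isHypoexpRV hlam hμ₁ hμ₂ hne hX hY hindep le_rfl,
    hmass, integral_Ioi_add_exp_neg_mul hα hβ, ← ENNReal.div_eq_inv_mul,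
    ← ENNReal.ofReal_div_of_pos (by positivity)]
  congr 1
  subst hw
  field_simp
  ring
end

section
/- In the M/M/1/∞ → M/M/1/∞ tandem with arrival rate λ and service rates γ (first) and μ (second), with λ < γ and λ < μ, the expected product of the second queue's inter-departure time Y with the previous packet's system time T in the first queue is E[Y·T] = 1/(γλ) + (λ/γ²)/(γ−λ) + (λ/(γμ))/(γ+μ−λ). In particular Cov(Y, T) = (1/γ²)·((γ+μ)(λ−μ))/(μ(γ+μ−λ)) < 0. -/
open MeasureTheory ProbabilityTheory Real

open Set
open scoped ENNReal

/-!
Condition on `T` and integrate out the other four independent exponential variables one at a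
time, innermost first: `T₂`, `S₂`, `S₁`, `X`. For `Z ∼ Exp(r)` three facts suffice:
`E[(u - Z)⁺] = u - 1/r + e^{-ru}/r` (this is `idleMean r u`), exponential tilting
`E[f(Z) e^{-sZ}] = r/(r+s) · E[f(Z')]` with `Z' ∼ Exp(r+s)`, and memorylessness: `(Z - t)⁺` is `0`
with probability `1 - e^{-rt}` and is otherwise again `Exp(r)`. This yields
`E[Y | T = t] = 1/μ + 1/γ - 1/(γ+μ-λ) + (1/λ - γ/((γ+μ-λ)μ)) e^{-λt}`, and integrating it, and
`t` times it, against `T ∼ Exp(γ-λ)` gives `E[Y]` and `E[YT]`. The iterated integrals are lower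
Lebesgue integrals, so Tonelli applies without proving integrability of `Y T` first.
-/

namespace ProbabilityTheory

section ExpMeasure

variable {r s t u : ℝ}

lemma expMeasure_eq_withDensity (r : ℝ) :
    expMeasure r =
      (volume.restrict (Ioi 0)).withDensity fun x => ENNReal.ofReal (r * exp (-(r * x))) := by
  have h : exponentialPDF r = (Ici 0).indicator fun x => ENNReal.ofReal (r * exp (-(r * x))) := by
    ext x
    by_cases hx : 0 ≤ x <;> simp [exponentialPDF_eq, hx]
  change volume.withDensity (exponentialPDF r) = _
  rw [h, withDensity_indicator measurableSet_Ici, Measure.restrict_congr_set Ioi_ae_eq_Ici]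

lemma ae_pos_expMeasure (r : ℝ) : ∀ᵐ x ∂expMeasure r, 0 < x := by
  rw [expMeasure_eq_withDensity]
  exact (withDensity_absolutelyContinuous _ _).ae_le (ae_restrict_mem measurableSet_Ioi)

lemma integral_expMeasure (hr : 0 ≤ r) (f : ℝ → ℝ) :
    ∫ x, f x ∂expMeasure r = ∫ x in Ioi 0, r * exp (-(r * x)) * f x := by
  rw [expMeasure_eq_withDensity, integral_withDensity_eq_integral_toReal_smul (by fun_prop)
    (ae_of_all _ fun _ => ENNReal.ofReal_lt_top)]
  simp only [ENNReal.toReal_ofReal (by positivity : 0 ≤ r * exp _), smul_eq_mul]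

lemma integrable_expMeasure_iff (hr : 0 ≤ r) {f : ℝ → ℝ} :
    Integrable f (expMeasure r) ↔ IntegrableOn (fun x => r * exp (-(r * x)) * f x) (Ioi 0) := by
  rw [expMeasure_eq_withDensity, integrable_withDensity_iff_integrable_smul' (by fun_prop)
    (ae_of_all _ fun _ => ENNReal.ofReal_lt_top)]
  simp only [ENNReal.toReal_ofReal (by positivity : 0 ≤ r * exp _), smul_eq_mul, IntegrableOn]

lemma integrable_id_expMeasure (hr : 0 < r) : Integrable (fun x => x) (expMeasure r) := by
  rw [integrable_expMeasure_iff hr.le]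
  refine IntegrableOn.congr_fun ((integrableOn_rpow_mul_exp_neg_mul_rpow (s := 1) (p := 1)
    (by norm_num) one_pos hr).const_mul r) (fun x _ => ?_) measurableSet_Ioi
  simp only [rpow_one]; ring_nf

lemma integral_id_expMeasure (hr : 0 < r) : ∫ x, x ∂expMeasure r = 1 / r := by
  rw [integral_expMeasure hr.le]
  have h : ∫ x in Ioi 0, x * exp (-(r * x)) = (r ^ 2)⁻¹ := by
    simpa [show (2 : ℝ) - 1 = 1 by norm_num] using
      integral_rpow_mul_exp_neg_mul_Ioi (a := 2) two_pos hr
  calc ∫ x in Ioi 0, r * exp (-(r * x)) * x = r * ∫ x in Ioi 0, x * exp (-(r * x)) := by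
        rw [← integral_const_mul]; congr 1; ext x; ring
    _ = 1 / r := by rw [h]; field_simp

lemma expDensity_mul_exp_neg (hrs : 0 < r + s) (y x : ℝ) :
    r * exp (-(r * x)) * (y * exp (-(s * x))) =
      r / (r + s) * ((r + s) * exp (-((r + s) * x)) * y) := by
  rw [show -((r + s) * x) = -(r * x) + -(s * x) by ring, exp_add]
  field_simp

lemma integrable_mul_exp_neg_expMeasure_iff (hr : 0 < r) (hrs : 0 < r + s) {f : ℝ → ℝ} :
    Integrable (fun x => f x * exp (-(s * x))) (expMeasure r) ↔
      Integrable f (expMeasure (r + s)) := by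
  simp only [integrable_expMeasure_iff hr.le, integrable_expMeasure_iff hrs.le,
    expDensity_mul_exp_neg hrs]
  exact integrable_const_mul_iff (isUnit_iff_ne_zero.2 (by positivity)) _

lemma integral_mul_exp_neg_expMeasure (hr : 0 ≤ r) (hrs : 0 < r + s) (f : ℝ → ℝ) :
    ∫ x, f x * exp (-(s * x)) ∂expMeasure r = r / (r + s) * ∫ x, f x ∂expMeasure (r + s) := by
  simp only [integral_expMeasure hr, integral_expMeasure hrs.le, expDensity_mul_exp_neg hrs,
    integral_const_mul]

lemma integrable_affine_expMeasure (hr : 0 < r) (a b : ℝ) :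
    Integrable (fun x => a + b * x) (expMeasure r) :=
  have := isProbabilityMeasure_expMeasure hr
  (integrable_const a).add ((integrable_id_expMeasure hr).const_mul b)

lemma integral_affine_expMeasure (hr : 0 < r) (a b : ℝ) :
    ∫ x, a + b * x ∂expMeasure r = a + b / r := by
  have := isProbabilityMeasure_expMeasure hr
  rw [integral_add (integrable_const a) ((integrable_id_expMeasure hr).const_mul b),
    integral_const_mul, integral_id_expMeasure hr]
  simp [div_eq_mul_inv]

lemma integrable_affine_exp_expMeasure (hr : 0 < r) (hrs : 0 < r + s) (a b c d : ℝ) :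
    Integrable (fun x => a + b * x + (c + d * x) * exp (-(s * x))) (expMeasure r) :=
  (integrable_affine_expMeasure hr a b).add
    ((integrable_mul_exp_neg_expMeasure_iff hr hrs).2 (integrable_affine_expMeasure hrs c d))

lemma integral_affine_exp_expMeasure (hr : 0 < r) (hrs : 0 < r + s) (a b c d : ℝ) :
    ∫ x, a + b * x + (c + d * x) * exp (-(s * x)) ∂expMeasure r =
      a + b / r + r / (r + s) * (c + d / (r + s)) := by
  rw [integral_add (integrable_affine_expMeasure hr a b)
    ((integrable_mul_exp_neg_expMeasure_iff hr hrs).2 (integrable_affine_expMeasure hrs c d)),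
    integral_affine_expMeasure hr, integral_mul_exp_neg_expMeasure hr.le hrs,
    integral_affine_expMeasure hrs]

lemma map_max_sub_expMeasure (hr : 0 < r) (ht : 0 ≤ t) :
    (expMeasure r).map (fun x => max (x - t) 0) =
      ENNReal.ofReal (1 - exp (-(r * t))) • Measure.dirac 0 +
        ENNReal.ofReal (exp (-(r * t))) • expMeasure r := by
  have := isProbabilityMeasure_expMeasure hr
  refine Measure.ext_of_Iic _ _ fun a => ?_
  rw [Measure.map_apply (by fun_prop) measurableSet_Iic]
  simp only [Measure.add_apply, Measure.smul_apply, smul_eq_mul]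
  rw [← ofReal_cdf (expMeasure r), cdf_expMeasure_eq hr]
  rcases le_or_gt 0 a with ha | ha
  · have hpre : (fun x => max (x - t) 0) ⁻¹' Iic a = Iic (t + a) := by
      ext x
      simp only [mem_preimage, mem_Iic, sup_le_iff, tsub_le_iff_right, ha, and_true]
      constructor <;> intro h <;> linarith
    rw [hpre, ← ofReal_cdf, cdf_expMeasure_eq hr, if_pos (by linarith), if_pos ha,
      Measure.dirac_apply_of_mem (mem_Iic.2 ha), mul_one, ← ENNReal.ofReal_mul (exp_pos _).le,
      ← ENNReal.ofReal_add (by simp [mul_nonneg hr.le ht]) (mul_nonneg (exp_pos _).le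
        (by simp [mul_nonneg hr.le ha]))]
    congr 1
    rw [show -(r * (t + a)) = -(r * t) + -(r * a) by ring, exp_add]
    ring
  · have hpre : (fun x => max (x - t) 0) ⁻¹' Iic a = ∅ := by
      ext x; simp only [mem_preimage, mem_Iic, mem_empty_iff_false, iff_false, not_le]
      exact ha.trans_le (le_max_right _ _)
    rw [hpre, if_neg (not_le.2 ha), Measure.dirac_apply' _ measurableSet_Iic,
      indicator_of_notMem (by simpa using ha)]
    simp

lemma integrable_comp_max_sub_const_expMeasure (hr : 0 < r) (ht : 0 ≤ t) {g : ℝ → ℝ}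
    (hg : Integrable g (expMeasure r)) :
    Integrable (fun x => g (max (x - t) 0)) (expMeasure r) := by
  have hg' : Integrable g ((expMeasure r).map fun x => max (x - t) 0) := by
    rw [map_max_sub_expMeasure hr ht]
    exact ((integrable_dirac (by simp)).smul_measure ENNReal.ofReal_ne_top).add_measure
      (hg.smul_measure ENNReal.ofReal_ne_top)
  exact (integrable_map_measure hg'.aestronglyMeasurable (by fun_prop)).1 hg'

lemma integral_comp_max_sub_const_expMeasure (hr : 0 < r) (ht : 0 ≤ t) {g : ℝ → ℝ}
    (hg : Integrable g (expMeasure r)) :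
    ∫ x, g (max (x - t) 0) ∂expMeasure r =
      (1 - exp (-(r * t))) * g 0 + exp (-(r * t)) * ∫ x, g x ∂expMeasure r := by
  have hdirac : Integrable g (ENNReal.ofReal (1 - exp (-(r * t))) • Measure.dirac 0) :=
    (integrable_dirac (by simp)).smul_measure ENNReal.ofReal_ne_top
  have hexp : Integrable g (ENNReal.ofReal (exp (-(r * t))) • expMeasure r) :=
    hg.smul_measure ENNReal.ofReal_ne_top
  have hmap := map_max_sub_expMeasure hr ht
  rw [← integral_map (by fun_prop) (hmap ▸ (hdirac.add_measure hexp).aestronglyMeasurable), hmap,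
    integral_add_measure hdirac hexp, integral_smul_measure, integral_smul_measure, integral_dirac,
    ENNReal.toReal_ofReal (by simp [mul_nonneg hr.le ht]), ENNReal.toReal_ofReal (exp_pos _).le,
    smul_eq_mul, smul_eq_mul]

noncomputable def idleMean (r u : ℝ) : ℝ := u - 1 / r + exp (-(r * u)) / r

@[fun_prop]
lemma measurable_idleMean (r : ℝ) : Measurable (idleMean r) := by
  unfold idleMean; fun_prop

lemma max_const_sub_eq (u x : ℝ) : max (u - x) 0 = u + -1 * x + max (x - u) 0 := by
  rcases le_total x u with h | h
  · rw [max_eq_left (by linarith), max_eq_right (by linarith)]; ring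
  · rw [max_eq_right (by linarith), max_eq_left (by linarith)]; ring

lemma integrable_max_const_sub_expMeasure (hr : 0 < r) (hu : 0 ≤ u) :
    Integrable (fun x => max (u - x) 0) (expMeasure r) := by
  simp only [max_const_sub_eq u]
  exact (integrable_affine_expMeasure hr u (-1)).add
    (integrable_comp_max_sub_const_expMeasure hr hu (integrable_id_expMeasure hr))

lemma integral_max_const_sub_expMeasure (hr : 0 < r) (hu : 0 ≤ u) :
    ∫ x, max (u - x) 0 ∂expMeasure r = idleMean r u := by
  simp only [max_const_sub_eq u]
  rw [integral_add (integrable_affine_expMeasure hr u (-1))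
      (integrable_comp_max_sub_const_expMeasure hr hu (integrable_id_expMeasure hr)),
    integral_affine_expMeasure hr, integral_comp_max_sub_const_expMeasure hr hu
      (integrable_id_expMeasure hr), integral_id_expMeasure hr, idleMean]
  ring

lemma idleMean_nonneg (hr : 0 < r) (hu : 0 ≤ u) : 0 ≤ idleMean r u := by
  rw [← integral_max_const_sub_expMeasure hr hu]
  exact integral_nonneg fun _ => le_max_right _ _

noncomputable def idleMeanAfterService (γ ν d : ℝ) : ℝ :=
  d + (1 / γ - 1 / ν) + γ / ((γ + ν) * ν) * exp (-(ν * d))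

@[fun_prop]
lemma measurable_idleMeanAfterService (γ ν : ℝ) : Measurable (idleMeanAfterService γ ν) := by
  unfold idleMeanAfterService; fun_prop

lemma idleMean_add_eq (ν z d : ℝ) :
    idleMean ν (z + d) = d - 1 / ν + 1 * z + (exp (-(ν * d)) / ν + 0 * z) * exp (-(ν * z)) := by
  rw [idleMean, show -(ν * (z + d)) = -(ν * d) + -(ν * z) by ring, exp_add]; ring

lemma integrable_idleMean_add_expMeasure {γ ν : ℝ} (hγ : 0 < γ) (hν : 0 < ν) (d : ℝ) :
    Integrable (fun z => idleMean ν (z + d)) (expMeasure γ) := by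
  simp only [idleMean_add_eq]
  exact integrable_affine_exp_expMeasure hγ (add_pos hγ hν) _ _ _ _

lemma integral_idleMean_add_expMeasure {γ ν : ℝ} (hγ : 0 < γ) (hν : 0 < ν) (d : ℝ) :
    ∫ z, idleMean ν (z + d) ∂expMeasure γ = idleMeanAfterService γ ν d := by
  simp only [idleMean_add_eq]
  rw [integral_affine_exp_expMeasure hγ (add_pos hγ hν), idleMeanAfterService]
  field_simp; ring

lemma idleMeanAfterService_nonneg {γ ν d : ℝ} (hγ : 0 < γ) (hν : 0 < ν) (hd : 0 ≤ d) :
    0 ≤ idleMeanAfterService γ ν d := by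
  rw [← integral_idleMean_add_expMeasure hγ hν d]
  exact integral_nonneg_of_ae <| (ae_pos_expMeasure γ).mono fun z hz =>
    idleMean_nonneg hν (by linarith)

end ExpMeasure

end ProbabilityTheory

lemma IsExpRV.map_eq {Ω : Type*} [MeasurableSpace Ω] {P : Measure Ω} [IsProbabilityMeasure P]
    {r : ℝ} {X : Ω → ℝ} (hr : 0 < r) (hX : IsExpRV P r X) : P.map X = expMeasure r := by
  have := isProbabilityMeasure_expMeasure hr
  refine Measure.ext_of_Iic _ _ fun a => ?_
  rw [Measure.map_apply hX.1 measurableSet_Iic, ← ofReal_cdf, cdf_expMeasure_eq hr]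
  have hle : ∀ b, 0 ≤ b → P (X ⁻¹' Iic b) = ENNReal.ofReal (1 - exp (-(r * b))) := by
    intro b hb
    have : X ⁻¹' Iic b = {ω | X ω > b}ᶜ := by ext ω; simp
    rw [this, prob_compl_eq_one_sub (measurableSet_lt measurable_const hX.1), hX.2 b hb,
      ← ENNReal.ofReal_one, ← ENNReal.ofReal_sub _ (exp_pos _).le, neg_mul]
  rcases le_or_gt 0 a with ha | ha
  · rw [if_pos ha, hle a ha]
  · rw [if_neg (not_le.2 ha), ENNReal.ofReal_zero]
    refine measure_mono_null (preimage_mono (Iic_subset_Iic.2 ha.le)) ?_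
    simp [hle 0 le_rfl]

lemma IsExpRV.ae_nonneg {Ω : Type*} [MeasurableSpace Ω] {P : Measure Ω} [IsProbabilityMeasure P]
    {r : ℝ} {X : Ω → ℝ} (hr : 0 < r) (hX : IsExpRV P r X) : ∀ᵐ ω ∂P, 0 ≤ X ω :=
  ae_of_ae_map hX.1.aemeasurable <| by
    rw [hX.map_eq hr]; exact (ae_pos_expMeasure r).mono fun _ h => h.le

namespace ProbabilityTheory

theorem IndepFun.lintegral_comp {Ω α β : Type*} [MeasurableSpace Ω]
    [MeasurableSpace α] [MeasurableSpace β] {P : Measure Ω} [IsFiniteMeasure P]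
    {W : Ω → α} {Z : Ω → β} (h : IndepFun W Z P) (hW : Measurable W) (hZ : Measurable Z)
    {F : α → β → ℝ≥0∞} (hF : Measurable (Function.uncurry F)) :
    ∫⁻ ω, F (W ω) (Z ω) ∂P = ∫⁻ ω, ∫⁻ z, F (W ω) z ∂(P.map Z) ∂P := by
  calc ∫⁻ ω, F (W ω) (Z ω) ∂P = ∫⁻ p, Function.uncurry F p ∂(P.map fun ω => (W ω, Z ω)) :=
        (lintegral_map hF (hW.prodMk hZ)).symm
    _ = ∫⁻ w, ∫⁻ z, F w z ∂(P.map Z) ∂(P.map W) := by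
        rw [(indepFun_iff_map_prod_eq_prod_map_map hW.aemeasurable hZ.aemeasurable).1 h,
          lintegral_prod _ hF.aemeasurable]
        rfl
    _ = ∫⁻ ω, ∫⁻ z, F (W ω) z ∂(P.map Z) ∂P := lintegral_map hF.lintegral_prod_right' hW

theorem IndepFun.lintegral_mul_ofReal_congr {Ω α β : Type*} [MeasurableSpace Ω]
    [MeasurableSpace α] [MeasurableSpace β] {P : Measure Ω} [IsFiniteMeasure P]
    {W : Ω → α} {Z : Ω → β} (h : IndepFun W Z P) (hW : Measurable W) (hZ : Measurable Z)
    {w : α → ℝ≥0∞} (hw : Measurable w) {f : α → β → ℝ} (hf : Measurable (Function.uncurry f))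
    {g : α → ℝ}
    (hg : ∀ᵐ ω ∂P, ∫⁻ z, ENNReal.ofReal (f (W ω) z) ∂(P.map Z) = ENNReal.ofReal (g (W ω))) :
    ∫⁻ ω, w (W ω) * ENNReal.ofReal (f (W ω) (Z ω)) ∂P =
      ∫⁻ ω, w (W ω) * ENNReal.ofReal (g (W ω)) ∂P := by
  rw [h.lintegral_comp hW hZ (F := fun a z => w a * ENNReal.ofReal (f a z))
    ((hw.comp measurable_fst).mul hf.ennreal_ofReal)]
  refine lintegral_congr_ae (hg.mono fun ω hω => ?_)
  have hf' : Measurable fun z => ENNReal.ofReal (f (W ω) z) :=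
    (hf.comp (measurable_const.prodMk measurable_id)).ennreal_ofReal
  simp only [lintegral_const_mul _ hf', hω]

lemma lintegral_ofReal_eq_of_integral {α : Type*} [MeasurableSpace α] {μ : Measure α}
    {f : α → ℝ} (hf : Integrable f μ) (h0 : 0 ≤ᵐ[μ] f) {v : ℝ} (hv : ∫ x, f x ∂μ = v) :
    ∫⁻ x, ENNReal.ofReal (f x) ∂μ = ENNReal.ofReal v := by
  rw [← hv, ofReal_integral_eq_lintegral_ofReal hf h0]

section LindleySteps

variable {r a t u : ℝ}

lemma lintegral_ofReal_add_max_const_sub_expMeasure (hr : 0 < r) (ha : 0 ≤ a) (hu : 0 ≤ u) :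
    ∫⁻ z, ENNReal.ofReal (a + max (u - z) 0) ∂expMeasure r = ENNReal.ofReal (a + idleMean r u) := by
  have := isProbabilityMeasure_expMeasure hr
  have hi := integrable_max_const_sub_expMeasure hr hu
  refine lintegral_ofReal_eq_of_integral (f := fun z => a + max (u - z) 0)
    ((integrable_const a).add hi) (ae_of_all _ fun _ => by positivity) ?_
  rw [integral_add (integrable_const a) hi, integral_max_const_sub_expMeasure hr hu]
  simp

lemma lintegral_ofReal_add_expMeasure (hr : 0 < r) (ha : 0 ≤ a) :
    ∫⁻ z, ENNReal.ofReal (z + a) ∂expMeasure r = ENNReal.ofReal (1 / r + a) := by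
  have := isProbabilityMeasure_expMeasure hr
  refine lintegral_ofReal_eq_of_integral (f := fun z => z + a)
    ((integrable_id_expMeasure hr).add (integrable_const a))
    ((ae_pos_expMeasure r).mono fun z hz => by positivity) ?_
  rw [integral_add (integrable_id_expMeasure hr) (integrable_const a), integral_id_expMeasure hr]
  simp

lemma lintegral_ofReal_add_idleMean_add_expMeasure {γ ν d : ℝ} (hγ : 0 < γ) (hν : 0 < ν)
    (ha : 0 ≤ a) (hd : 0 ≤ d) :
    ∫⁻ z, ENNReal.ofReal (a + idleMean ν (z + d)) ∂expMeasure γ =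
      ENNReal.ofReal (a + idleMeanAfterService γ ν d) := by
  have := isProbabilityMeasure_expMeasure hγ
  have hi := integrable_idleMean_add_expMeasure hγ hν d
  refine lintegral_ofReal_eq_of_integral (f := fun z => a + idleMean ν (z + d))
    ((integrable_const a).add hi) ((ae_pos_expMeasure γ).mono fun z hz =>
      add_nonneg ha (idleMean_nonneg hν (by linarith))) ?_
  rw [integral_add (integrable_const a) hi, integral_idleMean_add_expMeasure hγ hν]
  simp

lemma lintegral_ofReal_add_idleMeanAfterService_max_sub_const_expMeasure {lam γ ν : ℝ}
    (hlam : 0 < lam) (hγ : 0 < γ) (hν : 0 < ν) (ha : 0 ≤ a) (ht : 0 ≤ t) :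
    ∫⁻ z, ENNReal.ofReal (a + idleMeanAfterService γ ν (max (z - t) 0)) ∂expMeasure lam =
      ENNReal.ofReal (a + (1 / γ - 1 / (γ + ν)) +
        (1 / lam - γ / ((γ + ν) * (lam + ν))) * exp (-(lam * t))) := by
  have hg : (fun y => a + idleMeanAfterService γ ν y) = fun y =>
      a + (1 / γ - 1 / ν) + 1 * y + (γ / ((γ + ν) * ν) + 0 * y) * exp (-(ν * y)) := by
    ext y; rw [idleMeanAfterService]; ring
  have hgi : Integrable (fun y => a + idleMeanAfterService γ ν y) (expMeasure lam) := by
    rw [hg]; exact integrable_affine_exp_expMeasure hlam (add_pos hlam hν) _ _ _ _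
  refine lintegral_ofReal_eq_of_integral (integrable_comp_max_sub_const_expMeasure hlam ht hgi)
    (ae_of_all _ fun z => add_nonneg ha (idleMeanAfterService_nonneg hγ hν (le_max_right _ _)))
    ?_
  rw [integral_comp_max_sub_const_expMeasure hlam ht hgi, hg,
    integral_affine_exp_expMeasure hlam (add_pos hlam hν), idleMeanAfterService]
  simp only [mul_zero, neg_zero, exp_zero]
  field_simp
  ring

end LindleySteps

lemma iIndepFun.indepFun_prefix_five {Ω β : Type*} [MeasurableSpace Ω] [MeasurableSpace β]
    {P : Measure Ω} {f₀ f₁ f₂ f₃ f₄ : Ω → β}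
    (h : iIndepFun (β := fun _ : Fin 5 => β) ![f₀, f₁, f₂, f₃, f₄] P)
    (hm : ∀ i, Measurable (![f₀, f₁, f₂, f₃, f₄] i)) :
    IndepFun f₀ f₁ P ∧ IndepFun (fun ω => (f₀ ω, f₁ ω)) f₂ P ∧
      IndepFun (fun ω => (f₀ ω, f₁ ω, f₂ ω)) f₃ P ∧
      IndepFun (fun ω => (f₀ ω, f₁ ω, f₂ ω, f₃ ω)) f₄ P :=
  ⟨h.indepFun (show (0 : Fin 5) ≠ 1 by decide),
    h.indepFun_prodMk hm 0 1 2 (by decide) (by decide),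
    (h.indepFun_finset {0, 1, 2} {3} (by decide) hm).comp
      (φ := fun v : ({0, 1, 2} : Finset (Fin 5)) → β =>
        (v ⟨0, by decide⟩, v ⟨1, by decide⟩, v ⟨2, by decide⟩))
      (ψ := fun v : ({3} : Finset (Fin 5)) → β => v ⟨3, by decide⟩) (by fun_prop) (by fun_prop),
    (h.indepFun_finset {0, 1, 2, 3} {4} (by decide) hm).comp
      (φ := fun v : ({0, 1, 2, 3} : Finset (Fin 5)) → β =>
        (v ⟨0, by decide⟩, v ⟨1, by decide⟩, v ⟨2, by decide⟩, v ⟨3, by decide⟩))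
      (ψ := fun v : ({4} : Finset (Fin 5)) → β => v ⟨4, by decide⟩) (by fun_prop) (by fun_prop)⟩

section Lindley

variable {Ω : Type*} [MeasurableSpace Ω] {P : Measure Ω} [IsProbabilityMeasure P]
  {α lam γ μ ν : ℝ} {T X S₁ S₂ T₂ : Ω → ℝ}

theorem lintegral_mul_ofReal_lindley (hlam : 0 < lam) (hγ : 0 < γ) (hμ : 0 < μ) (hν : 0 < ν)
    (hT : Measurable T) (hT0 : ∀ᵐ ω ∂P, 0 ≤ T ω) (hX : IsExpRV P lam X)
    (hS₁ : IsExpRV P γ S₁) (hS₂ : IsExpRV P μ S₂) (hT₂ : IsExpRV P ν T₂)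
    (h₁ : IndepFun T X P) (h₂ : IndepFun (fun ω => (T ω, X ω)) S₁ P)
    (h₃ : IndepFun (fun ω => (T ω, X ω, S₁ ω)) S₂ P)
    (h₄ : IndepFun (fun ω => (T ω, X ω, S₁ ω, S₂ ω)) T₂ P) {w : ℝ → ℝ≥0∞} (hw : Measurable w) :
    ∫⁻ ω, w (T ω) * ENNReal.ofReal (S₂ ω + max (S₁ ω + max (X ω - T ω) 0 - T₂ ω) 0) ∂P =
      ∫⁻ ω, w (T ω) * ENNReal.ofReal (1 / μ + (1 / γ - 1 / (γ + ν)) +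
        (1 / lam - γ / ((γ + ν) * (lam + ν))) * exp (-(lam * T ω))) ∂P := by
  have hXm : Measurable X := hX.1
  have hS₁m : Measurable S₁ := hS₁.1
  have hS₂m : Measurable S₂ := hS₂.1
  calc _ = ∫⁻ ω, w (T ω) * ENNReal.ofReal (S₂ ω + idleMean ν (S₁ ω + max (X ω - T ω) 0)) ∂P :=
        h₄.lintegral_mul_ofReal_congr (by fun_prop) hT₂.1 (w := fun p => w p.1) (by fun_prop)
          (f := fun p z => p.2.2.2 + max (p.2.2.1 + max (p.2.1 - p.1) 0 - z) 0) (by fun_prop)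
          (g := fun p => p.2.2.2 + idleMean ν (p.2.2.1 + max (p.2.1 - p.1) 0)) <| by
          filter_upwards [hS₁.ae_nonneg hγ, hS₂.ae_nonneg hμ] with ω hs₁ hs₂
          rw [hT₂.map_eq hν]
          exact lintegral_ofReal_add_max_const_sub_expMeasure hν hs₂ (by positivity)
    _ = ∫⁻ ω, w (T ω) * ENNReal.ofReal (1 / μ + idleMean ν (S₁ ω + max (X ω - T ω) 0)) ∂P :=
        h₃.lintegral_mul_ofReal_congr (by fun_prop) hS₂m (w := fun p => w p.1) (by fun_prop)
          (f := fun p z => z + idleMean ν (p.2.2 + max (p.2.1 - p.1) 0)) (by fun_prop)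
          (g := fun p => 1 / μ + idleMean ν (p.2.2 + max (p.2.1 - p.1) 0)) <| by
          filter_upwards [hS₁.ae_nonneg hγ] with ω hs₁
          rw [hS₂.map_eq hμ]
          exact lintegral_ofReal_add_expMeasure hμ (idleMean_nonneg hν (by positivity))
    _ = ∫⁻ ω, w (T ω) *
          ENNReal.ofReal (1 / μ + idleMeanAfterService γ ν (max (X ω - T ω) 0)) ∂P :=
        h₂.lintegral_mul_ofReal_congr (by fun_prop) hS₁m (w := fun p => w p.1) (by fun_prop)
          (f := fun p z => 1 / μ + idleMean ν (z + max (p.2 - p.1) 0)) (by fun_prop)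
          (g := fun p => 1 / μ + idleMeanAfterService γ ν (max (p.2 - p.1) 0)) <|
          ae_of_all _ fun ω => by
            rw [hS₁.map_eq hγ]
            exact lintegral_ofReal_add_idleMean_add_expMeasure hγ hν (by positivity)
              (le_max_right _ _)
    _ = _ :=
        h₁.lintegral_mul_ofReal_congr hT hXm hw
          (f := fun t z => 1 / μ + idleMeanAfterService γ ν (max (z - t) 0)) (by fun_prop)
          (g := fun t => 1 / μ + (1 / γ - 1 / (γ + ν)) +
            (1 / lam - γ / ((γ + ν) * (lam + ν))) * exp (-(lam * t))) <| by
          filter_upwards [hT0] with ω ht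
          rw [hX.map_eq hlam]
          exact lintegral_ofReal_add_idleMeanAfterService_max_sub_const_expMeasure hlam hγ hν
            (by positivity) ht

theorem integral_comp_mul_lindley (hα : 0 < α) (hlam : 0 < lam) (hγ : 0 < γ) (hμ : 0 < μ)
    (hν : 0 < ν) (hT : IsExpRV P α T) (hX : IsExpRV P lam X) (hS₁ : IsExpRV P γ S₁)
    (hS₂ : IsExpRV P μ S₂) (hT₂ : IsExpRV P ν T₂)
    (hindep : iIndepFun (β := fun _ : Fin 5 => ℝ) ![T, X, S₁, S₂, T₂] P)
    {φ : ℝ → ℝ} (hφ : Measurable φ) (hφ0 : ∀ t, 0 ≤ t → 0 ≤ φ t) :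
    ∫ ω, φ (T ω) * (S₂ ω + max (S₁ ω + max (X ω - T ω) 0 - T₂ ω) 0) ∂P =
      ∫ t, φ t * (1 / μ + (1 / γ - 1 / (γ + ν)) +
        (1 / lam - γ / ((γ + ν) * (lam + ν))) * exp (-(lam * t))) ∂expMeasure α := by
  have hm : ∀ i, Measurable (![T, X, S₁, S₂, T₂] i) := by
    intro i; fin_cases i
    exacts [hT.1, hX.1, hS₁.1, hS₂.1, hT₂.1]
  obtain ⟨h₁, h₂, h₃, h₄⟩ := hindep.indepFun_prefix_five hm
  have hT0 := hT.ae_nonneg hα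
  have hK : 0 ≤ 1 / γ - 1 / (γ + ν) := sub_nonneg.2 (one_div_le_one_div_of_le hγ (by linarith))
  have hB : 0 ≤ 1 / lam - γ / ((γ + ν) * (lam + ν)) := by
    rw [sub_nonneg, div_le_div_iff₀ (by positivity) hlam]; nlinarith
  have hTm : Measurable T := hT.1
  have hXm : Measurable X := hX.1
  have hS₁m : Measurable S₁ := hS₁.1
  have hS₂m : Measurable S₂ := hS₂.1
  have hT₂m : Measurable T₂ := hT₂.1
  rw [← hT.map_eq hα, integral_map hT.1.aemeasurable (by fun_prop),
    integral_eq_lintegral_of_nonneg_ae (by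
      filter_upwards [hT0, hS₂.ae_nonneg hμ] with ω ht hs
      exact mul_nonneg (hφ0 _ ht) (add_nonneg hs (le_max_right _ _))) (by fun_prop),
    integral_eq_lintegral_of_nonneg_ae (by
      filter_upwards [hT0] with ω ht
      exact mul_nonneg (hφ0 _ ht) (add_nonneg (by positivity) (mul_nonneg hB (exp_pos _).le)))
      (by fun_prop)]
  congr 1
  calc _ = ∫⁻ ω, ENNReal.ofReal (φ (T ω)) *
          ENNReal.ofReal (S₂ ω + max (S₁ ω + max (X ω - T ω) 0 - T₂ ω) 0) ∂P :=
        lintegral_congr_ae (hT0.mono fun ω ht => ENNReal.ofReal_mul (hφ0 _ ht))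
    _ = ∫⁻ ω, ENNReal.ofReal (φ (T ω)) * ENNReal.ofReal (1 / μ + (1 / γ - 1 / (γ + ν)) +
          (1 / lam - γ / ((γ + ν) * (lam + ν))) * exp (-(lam * T ω))) ∂P :=
        lintegral_mul_ofReal_lindley hlam hγ hμ hν hTm hT0 hX hS₁ hS₂ hT₂ h₁ h₂ h₃ h₄
          hφ.ennreal_ofReal
    _ = _ := lintegral_congr_ae (hT0.mono fun ω ht => (ENNReal.ofReal_mul (hφ0 _ ht)).symm)

theorem integral_lindley (hα : 0 < α) (hlam : 0 < lam) (hγ : 0 < γ) (hμ : 0 < μ)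
    (hν : 0 < ν) (hT : IsExpRV P α T) (hX : IsExpRV P lam X) (hS₁ : IsExpRV P γ S₁)
    (hS₂ : IsExpRV P μ S₂) (hT₂ : IsExpRV P ν T₂)
    (hindep : iIndepFun (β := fun _ : Fin 5 => ℝ) ![T, X, S₁, S₂, T₂] P) :
    ∫ ω, S₂ ω + max (S₁ ω + max (X ω - T ω) 0 - T₂ ω) 0 ∂P =
      1 / μ + (1 / γ - 1 / (γ + ν)) +
        α / (α + lam) * (1 / lam - γ / ((γ + ν) * (lam + ν))) := by
  calc _ = ∫ t, 1 * (1 / μ + (1 / γ - 1 / (γ + ν)) +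
          (1 / lam - γ / ((γ + ν) * (lam + ν))) * exp (-(lam * t))) ∂expMeasure α := by
        simpa only [one_mul] using integral_comp_mul_lindley hα hlam hγ hμ hν hT hX hS₁ hS₂ hT₂
          hindep (φ := fun _ => 1) measurable_const fun _ _ => zero_le_one
    _ = ∫ t, 1 / μ + (1 / γ - 1 / (γ + ν)) + 0 * t +
          (1 / lam - γ / ((γ + ν) * (lam + ν)) + 0 * t) * exp (-(lam * t)) ∂expMeasure α := by
        congr 1; ext t; ring
    _ = _ := by rw [integral_affine_exp_expMeasure hα (add_pos hα hlam)]; ring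

theorem integral_mul_lindley (hα : 0 < α) (hlam : 0 < lam) (hγ : 0 < γ) (hμ : 0 < μ)
    (hν : 0 < ν) (hT : IsExpRV P α T) (hX : IsExpRV P lam X) (hS₁ : IsExpRV P γ S₁)
    (hS₂ : IsExpRV P μ S₂) (hT₂ : IsExpRV P ν T₂)
    (hindep : iIndepFun (β := fun _ : Fin 5 => ℝ) ![T, X, S₁, S₂, T₂] P) :
    ∫ ω, T ω * (S₂ ω + max (S₁ ω + max (X ω - T ω) 0 - T₂ ω) 0) ∂P =
      (1 / μ + (1 / γ - 1 / (γ + ν))) / α +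
        α / (α + lam) ^ 2 * (1 / lam - γ / ((γ + ν) * (lam + ν))) := by
  calc _ = ∫ t, t * (1 / μ + (1 / γ - 1 / (γ + ν)) +
          (1 / lam - γ / ((γ + ν) * (lam + ν))) * exp (-(lam * t))) ∂expMeasure α :=
        integral_comp_mul_lindley hα hlam hγ hμ hν hT hX hS₁ hS₂ hT₂ hindep
          (φ := fun t => t) measurable_id fun _ ht => ht
    _ = ∫ t, 0 + (1 / μ + (1 / γ - 1 / (γ + ν))) * t +
          (0 + (1 / lam - γ / ((γ + ν) * (lam + ν))) * t) * exp (-(lam * t)) ∂expMeasure α := by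
        congr 1; ext t; ring
    _ = _ := by
        rw [integral_affine_exp_expMeasure hα (add_pos hα hlam)]
        field_simp
        ring

end Lindley

end ProbabilityTheory

/-- In the stable M/M/1/∞ → M/M/1/∞ tandem with arrival rate `λ` and service rates
`γ` and `μ`: with `T ~ Exp(γ-λ)` the stationary system time at queue 1,
`X ~ Exp(λ)`, `S⁽¹⁾ ~ Exp(γ)`, `S⁽²⁾ ~ Exp(μ)`, `T⁽²⁾ ~ Exp(μ-λ)` independent, and the
inter-departure time of the second queue given by the Lindley recursion
`Y = S⁽²⁾ + (S⁽¹⁾ + (X - T)⁺ - T⁽²⁾)⁺`, one has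
`E[Y T] = 1/(γλ) + (λ/γ²)/(γ-λ) + (λ/(γμ))/(γ+μ-λ)` and
`Cov(Y, T) = (1/γ²)·((γ+μ)(λ-μ))/(μ(γ+μ-λ)) < 0`. -/
theorem tandem_cross_term
    {Ω : Type*} [MeasurableSpace Ω] (P : Measure Ω) [IsProbabilityMeasure P]
    (lam γ μ : ℝ) (hlam : 0 < lam) (hγ : lam < γ) (hμ : lam < μ)
    (T X S₁ S₂ T₂ : Ω → ℝ)
    (hT : IsExpRV P (γ - lam) T) (hX : IsExpRV P lam X)
    (hS₁ : IsExpRV P γ S₁) (hS₂ : IsExpRV P μ S₂) (hT₂ : IsExpRV P (μ - lam) T₂)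
    (hindep : iIndepFun (β := fun _ : Fin 5 => ℝ)
      ![T, X, S₁, S₂, T₂] P)
    (Y : Ω → ℝ) (hY : Y = fun ω => S₂ ω + max (S₁ ω + max (X ω - T ω) 0 - T₂ ω) 0) :
    (∫ ω, Y ω * T ω ∂P) =
        1 / (γ * lam) + (lam / γ ^ 2) / (γ - lam) + (lam / (γ * μ)) / (γ + μ - lam) ∧
      (∫ ω, Y ω * T ω ∂P) - (∫ ω, Y ω ∂P) * (∫ ω, T ω ∂P) =
        (1 / γ ^ 2) * ((γ + μ) * (lam - μ)) / (μ * (γ + μ - lam)) ∧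
      (1 / γ ^ 2) * ((γ + μ) * (lam - μ)) / (μ * (γ + μ - lam)) < 0 := by
  have hγ₀ : 0 < γ := hlam.trans hγ
  have hμ₀ : 0 < μ := hlam.trans hμ
  have hα : 0 < γ - lam := sub_pos.2 hγ
  have hν : 0 < μ - lam := sub_pos.2 hμ
  have hET : ∫ ω, T ω ∂P = 1 / (γ - lam) := by
    rw [← integral_id_expMeasure hα, ← hT.map_eq hα]
    exact (integral_map hT.1.aemeasurable aestronglyMeasurable_id).symm
  have hEY := integral_lindley hα hlam hγ₀ hμ₀ hν hT hX hS₁ hS₂ hT₂ hindep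
  have hEYT := integral_mul_lindley hα hlam hγ₀ hμ₀ hν hT hX hS₁ hS₂ hT₂ hindep
  subst hY
  simp only [mul_comm _ (T _)]
  rw [hEYT, hEY, hET, sub_add_cancel, show lam + (μ - lam) = μ by ring]
  have : γ + μ - lam ≠ 0 := by linarith
  refine ⟨by field_simp; ring, by field_simp; ring, ?_⟩
  exact div_neg_of_neg_of_pos (mul_neg_of_pos_of_neg (by positivity)
    (mul_neg_of_pos_of_neg (by positivity) (by linarith))) (mul_pos hμ₀ (by linarith))
end
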